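/- Let f : X → ℝ be Hölder continuous admitting a unique maximizing measure, let V be a calibrated subaction for f, and set R = R_− = f + V − V∘σ − β(f). For each c > 0 let h_c : X → (0,∞) be continuous and β_c > 0 be such that g_c := c f + log h_c − log h_c∘σ − log β_c satisfies (L_{g_c} 1)(x) = 1 for all x ∈ X; assume sup_{x∈X} |log h_c(x) − c V(x)| / c → 0 as c → ∞, and that ε_c := log β_c − c β(f) satisfies ε_c / c → 0. Then for every fixed x ∈ X, lim_{c,n→∞} ( (1/c) log (L_{cR}^n 1)(x) − n ε_c / c ) = 0. -/

import Mathlib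

/-!
With `φ_c = log h_c - c V`, the potential `c R` is cohomologous to the normalized potential `g_c`
up to the constant `ε_c = log β_c - c β(f)`: `c R (a y) = g_c (a y) + φ_c y - φ_c (a y) + ε_c`.
Hence `L_{cR}^n 1 = e^{n ε_c + φ_c} L_{g_c}^n (e^{-φ_c})`, and since `L_{g_c}` is a positive
operator fixing the constants, `|log L_{cR}^n 1 - n ε_c| ≤ 2 sup |φ_c| = o(c)`, uniformly in `n`.
-/

open MeasureTheory Filter Topology Set ENNReal

noncomputable section

namespace GXY

variable {M : Type*}

/-- The shift map on the sequence space `ℕ → M`. -/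
def shift (x : ℕ → M) : ℕ → M := fun n => x (n + 1)

/-- Prepending a symbol `a` to a sequence `x`. -/
def cons (a : M) (x : ℕ → M) : ℕ → M := fun n => Nat.casesOn n a x

/-- The metric `d(x,y) = ∑ θ^n d_M(x_n, y_n)` on `ℕ → M`. -/
def D [MetricSpace M] (θ : ℝ) (x y : ℕ → M) : ℝ := ∑' n, θ ^ n * dist (x n) (y n)

/-- Hölder continuity with respect to the metric `D θ`. -/
def IsHolder [MetricSpace M] (θ : ℝ) (f : (ℕ → M) → ℝ) : Prop :=
  ∃ C > (0 : ℝ), ∃ α ∈ Set.Ioc (0 : ℝ) 1, ∀ x y, |f x - f y| ≤ C * (D θ x y) ^ α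

/-- Shift-invariant Borel probability measures on `ℕ → M`. -/
def IsInvProb [MetricSpace M] [MeasurableSpace M] (μ : Measure (ℕ → M)) : Prop :=
  IsProbabilityMeasure μ ∧ μ.map shift = μ

/-- The maximal ergodic average `β(f)`. -/
def betaF [MetricSpace M] [MeasurableSpace M] (f : (ℕ → M) → ℝ) : ℝ :=
  sSup { r | ∃ μ : Measure (ℕ → M), IsInvProb μ ∧ r = ∫ x, f x ∂μ }

/-- A maximizing measure for `f`. -/
def IsMaximizing [MetricSpace M] [MeasurableSpace M] (f : (ℕ → M) → ℝ)
    (μ : Measure (ℕ → M)) : Prop :=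
  IsInvProb μ ∧ ∫ x, f x ∂μ = betaF f

/-- A calibrated subaction `V` for `f`:
`V y = max_{σ x = y} (f x + V x - β f)` for every `y`. -/
def IsCalibrated [MetricSpace M] [MeasurableSpace M] (f V : (ℕ → M) → ℝ) : Prop :=
  Continuous V ∧
    ∀ y, IsGreatest { t | ∃ x, shift x = y ∧ t = f x + V x - betaF f } (V y)

/-- The Ruelle transfer operator `(L_g w)(x) = ∫_M e^{g(ax)} w(ax) dm(a)`. -/
def Ruelle [MetricSpace M] [MeasurableSpace M] (m : Measure M) (g w : (ℕ → M) → ℝ) :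
    (ℕ → M) → ℝ :=
  fun x => ∫ a, Real.exp (g (cons a x)) * w (cons a x) ∂m

/-- `R₊ = β(f) + V ∘ σ - V - f ≥ 0`. -/
def Rplus [MetricSpace M] [MeasurableSpace M] (f V : (ℕ → M) → ℝ) (x : ℕ → M) : ℝ :=
  betaF f + V (shift x) - V x - f x

/-- `R₊^∞(z) = ∑_{j≥0} R₊(σ^j z) ∈ [0,∞]`. -/
def RplusInf [MetricSpace M] [MeasurableSpace M] (f V : (ℕ → M) → ℝ) (z : ℕ → M) : ℝ≥0∞ :=
  ∑' j : ℕ, ENNReal.ofReal (Rplus f V (shift^[j] z))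

/-- `R₋ = f + V - V ∘ σ - β(f) ≤ 0`. -/
def Rminus [MetricSpace M] [MeasurableSpace M] (f V : (ℕ → M) → ℝ) (x : ℕ → M) : ℝ :=
  f x + V x - V (shift x) - betaF f

/-- The Birkhoff sum `R₋^k = ∑_{j<k} R₋ ∘ σ^j`. -/
def RminusBirk [MetricSpace M] [MeasurableSpace M] (f V : (ℕ → M) → ℝ) (k : ℕ)
    (z : ℕ → M) : ℝ :=
  ∑ j ∈ Finset.range k, Rminus f V (shift^[j] z)

/-- Extended-real logarithm with the convention `log 0 = -∞`. -/
def elog (t : ℝ) : EReal := if t = 0 then ⊥ else ((Real.log t : ℝ) : EReal)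

open Real

theorem shift_cons (a : M) (x : ℕ → M) : shift (cons a x) = x := rfl

section Topology

variable [TopologicalSpace M]

theorem continuous_shift : Continuous (shift : (ℕ → M) → ℕ → M) :=
  continuous_pi fun n => continuous_apply (n + 1)

theorem continuous_cons : Continuous fun p : M × (ℕ → M) => cons p.1 p.2 :=
  continuous_pi fun n => by
    cases n with
    | zero => exact continuous_fst
    | succ n => exact (continuous_apply n).comp continuous_snd

end Topology

section Holder

variable [MetricSpace M] {θ : ℝ}

theorem continuous_D (hdiam : ∀ a b : M, dist a b ≤ 1) (hθ₀ : 0 ≤ θ) (hθ₁ : θ < 1)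
    (x : ℕ → M) : Continuous (D θ x) := by
  refine continuous_tsum (u := fun n => θ ^ n)
    (fun n => continuous_const.mul (continuous_const.dist (continuous_apply n)))
    (summable_geometric_of_lt_one hθ₀ hθ₁) fun n y => ?_
  rw [Real.norm_of_nonneg (by positivity)]
  exact mul_le_of_le_one_right (by positivity) (hdiam _ _)

theorem IsHolder.continuous (hdiam : ∀ a b : M, dist a b ≤ 1) (hθ₀ : 0 ≤ θ) (hθ₁ : θ < 1)
    {f : (ℕ → M) → ℝ} (hf : IsHolder θ f) : Continuous f := by
  obtain ⟨C, -, α, hα, hfα⟩ := hf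
  refine continuous_iff_continuousAt.2 fun x => tendsto_iff_dist_tendsto_zero.2 ?_
  have hD : Tendsto (D θ x) (𝓝 x) (𝓝 0) := by
    simpa [D] using (continuous_D hdiam hθ₀ hθ₁ x).tendsto x
  have hCD : Tendsto (fun y => C * D θ x y ^ α) (𝓝 x) (𝓝 0) := by
    simpa [Real.zero_rpow hα.1.ne'] using
      (hD.rpow_const (Or.inr hα.1.le)).const_mul C
  refine squeeze_zero (fun _ => dist_nonneg) (fun y => ?_) hCD
  rw [Real.dist_eq, abs_sub_comm]
  exact hfα x y

end Holder

section Ruelle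

variable [MetricSpace M] [MeasurableSpace M] (m : Measure M)

theorem ruelle_const_mul (g w : (ℕ → M) → ℝ) (k : ℝ) :
    Ruelle m g (fun z => k * w z) = fun x => k * Ruelle m g w x := by
  ext x
  simp only [Ruelle, ← integral_const_mul]
  congr 1 with a
  ring

variable {m}

/-- No integrability is needed: the Bochner integral commutes with constant factors
unconditionally. -/
theorem ruelle_of_cohomologous {R g φ : (ℕ → M) → ℝ} {ε : ℝ}
    (hR : ∀ a y, R (cons a y) = g (cons a y) + φ y - φ (cons a y) + ε) (w : (ℕ → M) → ℝ)
    (x : ℕ → M) :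
    Ruelle m R w x = exp (ε + φ x) * Ruelle m g (fun z => exp (-φ z) * w z) x := by
  simp only [Ruelle, ← integral_const_mul]
  congr 1 with a
  rw [hR, mul_left_comm, ← mul_assoc, ← mul_assoc, ← exp_add, ← exp_add]
  ring_nf

theorem iterate_ruelle_of_cohomologous {R g φ : (ℕ → M) → ℝ} {ε : ℝ}
    (hR : ∀ a y, R (cons a y) = g (cons a y) + φ y - φ (cons a y) + ε) (w : (ℕ → M) → ℝ)
    (n : ℕ) (x : ℕ → M) :
    (Ruelle m R)^[n] w x =
      exp (n * ε + φ x) * (Ruelle m g)^[n] (fun z => exp (-φ z) * w z) x := by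
  induction n generalizing x with
  | zero => simp [← mul_assoc, ← exp_add]
  | succ n ih =>
    have hconj : (fun z => exp (-φ z) * (Ruelle m R)^[n] w z) =
        fun z => exp (n * ε) * (Ruelle m g)^[n] (fun z => exp (-φ z) * w z) z := by
      ext z
      rw [ih, ← mul_assoc, ← exp_add]
      ring_nf
    rw [Function.iterate_succ_apply', ruelle_of_cohomologous hR, hconj, ruelle_const_mul,
      Function.iterate_succ_apply', ← mul_assoc, ← exp_add]
    push_cast
    ring_nf

variable [CompactSpace M] [OpensMeasurableSpace M] [IsFiniteMeasure m]

theorem continuous_ruelle {g w : (ℕ → M) → ℝ} (hg : Continuous g) (hw : Continuous w) :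
    Continuous (Ruelle m g w) := by
  have hF : Continuous fun p : (ℕ → M) × M => exp (g (cons p.2 p.1)) * w (cons p.2 p.1) := by
    have : Continuous fun p : (ℕ → M) × M => cons p.2 p.1 :=
      continuous_cons.comp (continuous_snd.prodMk continuous_fst)
    exact (hg.comp this).rexp.mul (hw.comp this)
  obtain ⟨K, hK⟩ := isCompact_univ.exists_bound_of_continuousOn hF.continuousOn
  exact continuous_of_dominated (bound := fun _ => K)
    (fun x => (hF.comp (Continuous.prodMk_right x)).aestronglyMeasurable_of_compactSpace)
    (fun x => .of_forall fun a => hK (x, a) (mem_univ _)) (integrable_const K)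
    (.of_forall fun a => hF.comp (Continuous.prodMk_left a))

theorem continuous_iterate_ruelle {g w : (ℕ → M) → ℝ} (hg : Continuous g) (hw : Continuous w)
    (n : ℕ) : Continuous ((Ruelle m g)^[n] w) := by
  induction n with
  | zero => exact hw
  | succ n ih => rw [Function.iterate_succ_apply']; exact continuous_ruelle hg ih

theorem ruelle_mem_Icc {g u : (ℕ → M) → ℝ} {a b : ℝ} (hg : Continuous g)
    (hnorm : ∀ x, Ruelle m g (fun _ => 1) x = 1) (hu : Continuous u) (hab : ∀ z, u z ∈ Icc a b)
    (x : ℕ → M) : Ruelle m g u x ∈ Icc a b := by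
  have hnorm' : ∫ s, exp (g (cons s x)) ∂m = 1 := by simpa [Ruelle] using hnorm x
  have hcons : Continuous fun s : M => cons s x := continuous_cons.comp (.prodMk_left x)
  have hint : Integrable (fun s => exp (g (cons s x)) * u (cons s x)) m :=
    ((hg.comp hcons).rexp.mul (hu.comp hcons)).integrable_of_hasCompactSupport
      (.of_compactSpace _)
  have hint_g : Integrable (fun s => exp (g (cons s x))) m :=
    .of_integral_ne_zero (by rw [hnorm']; exact one_ne_zero)
  constructor
  · calc a = ∫ s, exp (g (cons s x)) * a ∂m := by rw [integral_mul_const, hnorm', one_mul]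
      _ ≤ Ruelle m g u x := integral_mono (hint_g.mul_const a) hint fun s =>
          mul_le_mul_of_nonneg_left (hab _).1 (exp_pos _).le
  · calc Ruelle m g u x ≤ ∫ s, exp (g (cons s x)) * b ∂m :=
          integral_mono hint (hint_g.mul_const b) fun s =>
            mul_le_mul_of_nonneg_left (hab _).2 (exp_pos _).le
      _ = b := by rw [integral_mul_const, hnorm', one_mul]

theorem iterate_ruelle_mem_Icc {g u : (ℕ → M) → ℝ} {a b : ℝ} (hg : Continuous g)
    (hnorm : ∀ x, Ruelle m g (fun _ => 1) x = 1) (hu : Continuous u) (hab : ∀ z, u z ∈ Icc a b)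
    (n : ℕ) (x : ℕ → M) : (Ruelle m g)^[n] u x ∈ Icc a b := by
  induction n generalizing x with
  | zero => exact hab x
  | succ n ih =>
    rw [Function.iterate_succ_apply']
    exact ruelle_mem_Icc hg hnorm (continuous_iterate_ruelle hg hu n) ih x

theorem abs_log_iterate_ruelle_sub_le {R g φ : (ℕ → M) → ℝ} {ε B : ℝ} (hg : Continuous g)
    (hφ : Continuous φ) (hnorm : ∀ x, Ruelle m g (fun _ => 1) x = 1)
    (hR : ∀ a y, R (cons a y) = g (cons a y) + φ y - φ (cons a y) + ε)
    (hφB : ∀ z, |φ z| ≤ B) (n : ℕ) (x : ℕ → M) :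
    |log ((Ruelle m R)^[n] (fun _ => 1) x) - n * ε| ≤ 2 * B := by
  set u := (Ruelle m g)^[n] (fun z => exp (-φ z) * 1) x
  have hu : u ∈ Icc (exp (-B)) (exp B) :=
    iterate_ruelle_mem_Icc hg hnorm (by fun_prop) (fun z => by
      obtain ⟨h₁, h₂⟩ := abs_le.1 (hφB z)
      rw [mul_one]
      exact ⟨exp_le_exp.2 (by linarith), exp_le_exp.2 (by linarith)⟩) n x
  have hu₀ : 0 < u := (exp_pos _).trans_le hu.1
  have hlog_u : |log u| ≤ B :=
    abs_le.2 ⟨(le_log_iff_exp_le hu₀).2 hu.1, (log_le_iff_le_exp hu₀).2 hu.2⟩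
  rw [iterate_ruelle_of_cohomologous hR, log_mul (exp_pos _).ne' hu₀.ne', log_exp]
  calc |n * ε + φ x + log u - n * ε| = |φ x + log u| := by ring_nf
    _ ≤ |φ x| + |log u| := abs_add_le _ _
    _ ≤ 2 * B := by linarith [hφB x]

end Ruelle

theorem asymptotics_of_iterated_cR_operator_general
    [MetricSpace M] [CompactSpace M] [MeasurableSpace M] [BorelSpace M]
    (hdiam : ∀ a b : M, dist a b ≤ 1)
    (θ : ℝ) (hθ : θ ∈ Set.Ioo (0 : ℝ) 1)
    (m : Measure M) [IsProbabilityMeasure m]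
    (f V : (ℕ → M) → ℝ) (hf : IsHolder θ f)
    (hV : IsCalibrated f V)
    (h : ℝ → (ℕ → M) → ℝ) (hhpos : ∀ c > (0 : ℝ), ∀ x, 0 < h c x)
    (hhcont : ∀ c > (0 : ℝ), Continuous (h c))
    (βc : ℝ → ℝ)
    (g : ℝ → (ℕ → M) → ℝ)
    (hg : ∀ c > (0 : ℝ), ∀ x, g c x =
      c * f x + Real.log (h c x) - Real.log (h c (shift x)) - Real.log (βc c))
    (hnorm : ∀ c > (0 : ℝ), ∀ x, Ruelle m (g c) (fun _ => 1) x = 1)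
    (hsub : ∀ ε > (0 : ℝ), ∃ N : ℝ, ∀ c > N, ∀ x, |Real.log (h c x) - c * V x| / c < ε)
    :
    ∀ x : ℕ → M, ∀ ε > (0 : ℝ), ∃ N : ℝ, ∀ c > N, ∀ n : ℕ, (n : ℝ) > N →
      |(1 / c) * Real.log ((Ruelle m (fun z => c * Rminus f V z))^[n] (fun _ => 1) x)
        - (n : ℝ) * (Real.log (βc c) - c * betaF f) / c - 0| < ε := by
  intro x ε hε
  obtain ⟨N, hN⟩ := hsub (ε / 3) (by positivity)
  refine ⟨max N 0, fun c hc n _ => ?_⟩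
  have hc₀ : 0 < c := (le_max_right N 0).trans_lt hc
  set εc := log (βc c) - c * betaF f
  set φ : (ℕ → M) → ℝ := fun z => log (h c z) - c * V z
  have hlog_h : Continuous fun z => log (h c z) :=
    (hhcont c hc₀).log fun z => (hhpos c hc₀ z).ne'
  have hgc : Continuous (g c) := by
    rw [funext (hg c hc₀)]
    exact ((continuous_const.mul (hf.continuous hdiam hθ.1.le hθ.2)).add hlog_h).sub
      (hlog_h.comp continuous_shift) |>.sub continuous_const
  have hcohom : ∀ a y, c * Rminus f V (cons a y) = g c (cons a y) + φ y - φ (cons a y) + εc :=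
    fun a y => by simp only [hg c hc₀, Rminus, shift_cons, φ, εc]; ring
  have hφB : ∀ z, |φ z| ≤ c * (ε / 3) := fun z => by
    have := hN c ((le_max_left N 0).trans_lt hc) z
    rw [div_lt_iff₀ hc₀] at this
    linarith
  have hbound := abs_log_iterate_ruelle_sub_le (R := fun z => c * Rminus f V z) hgc
    (hlog_h.sub (continuous_const.mul hV.1)) (hnorm c hc₀) hcohom hφB n x
  rw [show ∀ L : ℝ, 1 / c * L - n * εc / c - 0 = (L - n * εc) / c from fun L => by ring,
    abs_div, abs_of_pos hc₀, div_lt_iff₀ hc₀]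
  linarith [mul_pos hc₀ hε]

theorem asymptotics_of_iterated_cR_operator
    [MetricSpace M] [CompactSpace M] [ConnectedSpace M] [MeasurableSpace M] [BorelSpace M]
    (hdiam : ∀ a b : M, dist a b ≤ 1)
    (θ : ℝ) (hθ : θ ∈ Set.Ioo (0 : ℝ) 1)
    (m : Measure M) [IsProbabilityMeasure m]
    (f V : (ℕ → M) → ℝ) (hf : IsHolder θ f)
    (huniq : ∃! μ : Measure (ℕ → M), IsMaximizing f μ)
    (hV : IsCalibrated f V)
    (h : ℝ → (ℕ → M) → ℝ) (hhpos : ∀ c > (0 : ℝ), ∀ x, 0 < h c x)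
    (hhcont : ∀ c > (0 : ℝ), Continuous (h c))
    (βc : ℝ → ℝ) (hβc : ∀ c > (0 : ℝ), 0 < βc c)
    (g : ℝ → (ℕ → M) → ℝ)
    (hg : ∀ c > (0 : ℝ), ∀ x, g c x =
      c * f x + Real.log (h c x) - Real.log (h c (shift x)) - Real.log (βc c))
    (hnorm : ∀ c > (0 : ℝ), ∀ x, Ruelle m (g c) (fun _ => 1) x = 1)
    (hsub : ∀ ε > (0 : ℝ), ∃ N : ℝ, ∀ c > N, ∀ x, |Real.log (h c x) - c * V x| / c < ε)
    (hεc : Tendsto (fun c => (Real.log (βc c) - c * betaF f) / c) atTop (nhds 0))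
    :
    ∀ x : ℕ → M, ∀ ε > (0 : ℝ), ∃ N : ℝ, ∀ c > N, ∀ n : ℕ, (n : ℝ) > N →
      |(1 / c) * Real.log ((Ruelle m (fun z => c * Rminus f V z))^[n] (fun _ => 1) x)
        - (n : ℝ) * (Real.log (βc c) - c * betaF f) / c - 0| < ε :=
  asymptotics_of_iterated_cR_operator_general hdiam θ hθ m f V hf hV h hhpos hhcont βc g hg hnorm
    hsub

end GXY
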